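/- Let (X,d,μ) be an RD-space with parameters κ≤n and μ(X)=∞, let 0<α≤1, and let T be an m-linear operator bounded from L^{l₁}(X)×⋯×L^{l_m}(X) to L^{q,∞}(X), where 1≤l₁,…,l_m<∞, 1/l=1/l₁+⋯+1/l_m and 0<l/q≤ακ/n, and let p₀' ≥ max{l₁,…,l_m}. Then for every 0<δ<q there exists C>0 such that for every ball B=B(z_B,r_B) with 0<r_B<1/4, setting B̃=B(z_B,r_B^α), for every x∈B and every m-tuple f⃗=(f₁,…,f_m) of bounded measurable functions with bounded support, (μ(B)^{-1}∫_B |T(f₁χ_{16B̃},…,f_mχ_{16B̃})(z)|^δ dμ(z))^{1/δ} ≤ C·r_B^{ακ/l − n/q}·𝓜_{p₀'}(f⃗)(x) ≤ C·𝓜_{p₀'}(f⃗)(x). -/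

import Mathlib

open MeasureTheory Metric ENNReal Set Bornology
open scoped BigOperators NNReal ENNReal

noncomputable section

section Defs

variable {X : Type*} [MetricSpace X] [MeasurableSpace X] [BorelSpace X]

/-- Weighted `L^p` norm `(∫ |f|^p w dμ)^{1/p}` of a real-valued function. -/
def lpNormW (μ : Measure X) (p : ℝ) (w : X → ℝ) (f : X → ℝ) : ℝ≥0∞ :=
  (∫⁻ x, ENNReal.ofReal (|f x| ^ p * w x) ∂μ) ^ (1 / p)

/-- Weighted `L^p` norm of an `ℝ≥0∞`-valued function. -/
def lpNormW' (μ : Measure X) (p : ℝ) (w : X → ℝ) (g : X → ℝ≥0∞) : ℝ≥0∞ :=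
  (∫⁻ x, g x ^ p * ENNReal.ofReal (w x) ∂μ) ^ (1 / p)

/-- Weighted weak `L^p` (Lorentz `L^{p,∞}`) norm of a real-valued function. -/
def weakLpNormW (μ : Measure X) (p : ℝ) (w : X → ℝ) (f : X → ℝ) : ℝ≥0∞ :=
  ⨆ (t : ℝ) (_ : 0 < t),
    ENNReal.ofReal t * (∫⁻ x in {y | t < |f y|}, ENNReal.ofReal (w x) ∂μ) ^ (1 / p)

/-- Weighted weak `L^p` norm of an `ℝ≥0∞`-valued function. -/
def weakLpNormW' (μ : Measure X) (p : ℝ) (w : X → ℝ) (g : X → ℝ≥0∞) : ℝ≥0∞ :=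
  ⨆ (t : ℝ) (_ : 0 < t),
    ENNReal.ofReal t * (∫⁻ x in {y | ENNReal.ofReal t < g y}, ENNReal.ofReal (w x) ∂μ) ^ (1 / p)

/-- The BMO seminorm `sup_B μ(B)⁻¹ ∫_B |f - f_B| dμ` (supremum over balls). -/
def bmoNorm (μ : Measure X) (f : X → ℝ) : ℝ≥0∞ :=
  ⨆ (c : X) (r : ℝ) (_ : 0 < r),
    (μ (ball c r))⁻¹ *
      ∫⁻ y in ball c r, ENNReal.ofReal |f y - ⨍ z in ball c r, f z ∂μ| ∂μ

/-- Membership in `BMO(X)`. -/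
def MemBMO (μ : Measure X) (f : X → ℝ) : Prop :=
  LocallyIntegrable f μ ∧ bmoNorm μ f < ⊤

/-- The Hardy–Littlewood maximal function. -/
def hlMaximal (μ : Measure X) (f : X → ℝ) (x : X) : ℝ≥0∞ :=
  ⨆ (c : X) (r : ℝ) (_ : 0 < r) (_ : x ∈ ball c r),
    (μ (ball c r))⁻¹ * ∫⁻ y in ball c r, ENNReal.ofReal |f y| ∂μ

/-- The sharp maximal function `M^♯ f`. -/
def sharpMaximal (μ : Measure X) (f : X → ℝ) (x : X) : ℝ≥0∞ :=
  ⨆ (c : X) (r : ℝ) (_ : 0 < r) (_ : x ∈ ball c r),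
    (μ (ball c r))⁻¹ *
      ∫⁻ y in ball c r, ENNReal.ofReal |f y - ⨍ z in ball c r, f z ∂μ| ∂μ

/-- `M_δ^♯ f = (M^♯(|f|^δ))^{1/δ}`. -/
def sharpMaximalPow (μ : Measure X) (δ : ℝ) (f : X → ℝ) (x : X) : ℝ≥0∞ :=
  (sharpMaximal μ (fun y => |f y| ^ δ) x) ^ (1 / δ)

/-- The multilinear maximal operator `𝓜(f⃗)`. -/
def multiMaximal (μ : Measure X) {m : ℕ} (f : Fin m → X → ℝ) (x : X) : ℝ≥0∞ :=
  ⨆ (c : X) (r : ℝ) (_ : 0 < r) (_ : x ∈ ball c r),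
    ∏ j, ((μ (ball c r))⁻¹ * ∫⁻ y in ball c r, ENNReal.ofReal |f j y| ∂μ)

/-- `𝓜_s(f⃗) = (𝓜(|f₁|^s,…,|f_m|^s))^{1/s}`. -/
def multiMaximalPow (μ : Measure X) {m : ℕ} (s : ℝ) (f : Fin m → X → ℝ) (x : X) : ℝ≥0∞ :=
  (multiMaximal μ (fun j y => |f j y| ^ s) x) ^ (1 / s)

/-- The Muckenhoupt `A₁` condition on a metric measure space. -/
def MemA1 (μ : Measure X) (w : X → ℝ) : Prop :=
  (∀ x, 0 ≤ w x) ∧ LocallyIntegrable w μ ∧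
  ∃ C : ℝ, 0 < C ∧ ∀ (c : X) (r : ℝ), 0 < r →
    (μ (ball c r))⁻¹ * (∫⁻ y in ball c r, ENNReal.ofReal (w y) ∂μ) ≤
      ENNReal.ofReal C * essInf (fun y => ENNReal.ofReal (w y)) (μ.restrict (ball c r))

/-- The Muckenhoupt `A_p` condition, `1 < p < ∞`, on a metric measure space. -/
def MemAp (μ : Measure X) (p : ℝ) (w : X → ℝ) : Prop :=
  (∀ x, 0 ≤ w x) ∧ LocallyIntegrable w μ ∧
  ∃ C : ℝ, 0 < C ∧ ∀ (c : X) (r : ℝ), 0 < r →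
    ((μ (ball c r))⁻¹ * ∫⁻ y in ball c r, ENNReal.ofReal (w y) ∂μ) *
      ((μ (ball c r))⁻¹ *
        ∫⁻ y in ball c r, ENNReal.ofReal (w y ^ (-(1 / (p - 1)))) ∂μ) ^ (p - 1) ≤
      ENNReal.ofReal C

/-- `A_∞ = ⋃_{p ≥ 1} A_p`. -/
def MemAinf (μ : Measure X) (w : X → ℝ) : Prop :=
  MemA1 μ w ∨ ∃ p : ℝ, 1 < p ∧ MemAp μ p w

/-- The `j`-th factor in the multilinear `A_{p⃗}` condition over a ball `B`:
`((μ B)⁻¹ ∫_B w^{1-p'} dμ)^{1/p'}`, read as `(ess inf_B w)⁻¹` when `p = 1`. -/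
def apFactor (μ : Measure X) (pj : ℝ) (wj : X → ℝ) (B : Set X) : ℝ≥0∞ :=
  if pj = 1 then (essInf (fun y => ENNReal.ofReal (wj y)) (μ.restrict B))⁻¹
  else ((μ B)⁻¹ * ∫⁻ y in B, ENNReal.ofReal (wj y ^ (-(1 / (pj - 1)))) ∂μ) ^ (1 - 1 / pj)

/-- The multiple-weight condition `A_{p⃗}` of Lerner–Grafakos type on a metric
measure space, where `1/p = ∑ 1/p_j` and `ν_{w⃗} = ∏ w_j^{p/p_j}`. -/
def MemAVec (μ : Measure X) {m : ℕ} (p : Fin m → ℝ) (w : Fin m → X → ℝ) : Prop :=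
  (∀ j x, 0 ≤ w j x) ∧ (∀ j, LocallyIntegrable (w j) μ) ∧
  ∃ C : ℝ, 0 < C ∧ ∀ (c : X) (r : ℝ), 0 < r →
    ((μ (ball c r))⁻¹ *
        ∫⁻ y in ball c r,
          ENNReal.ofReal (∏ j, w j y ^ ((∑ i, 1 / p i)⁻¹ / p j)) ∂μ) ^ (∑ i, 1 / p i) *
      ∏ j, apFactor μ (p j) (w j) (ball c r) ≤ ENNReal.ofReal C

/-- Generalized weighted Morrey norm `sup_B (φ(w(B))⁻¹ ∫_B |f|^p w dμ)^{1/p}`. -/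
def morreyNormW (μ : Measure X) (p : ℝ) (φ : ℝ → ℝ) (w : X → ℝ) (f : X → ℝ) : ℝ≥0∞ :=
  ⨆ (c : X) (r : ℝ) (_ : 0 < r),
    ((ENNReal.ofReal
        (φ (∫⁻ y in ball c r, ENNReal.ofReal (w y) ∂μ).toReal))⁻¹ *
      ∫⁻ y in ball c r, ENNReal.ofReal (|f y| ^ p * w y) ∂μ) ^ (1 / p)

/-- Generalized weighted Morrey norm of an `ℝ≥0∞`-valued function. -/
def morreyNormW' (μ : Measure X) (p : ℝ) (φ : ℝ → ℝ) (w : X → ℝ) (g : X → ℝ≥0∞) : ℝ≥0∞ :=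
  ⨆ (c : X) (r : ℝ) (_ : 0 < r),
    ((ENNReal.ofReal
        (φ (∫⁻ y in ball c r, ENNReal.ofReal (w y) ∂μ).toReal))⁻¹ *
      ∫⁻ y in ball c r, g y ^ p * ENNReal.ofReal (w y) ∂μ) ^ (1 / p)

/-- An RD-space: a space of homogeneous type whose (regular Borel) measure is
doubling (with upper dimension `n = log₂ C₁`) and reverse doubling with exponent
`κ ≤ n`; we also assume `μ(X) = ∞` throughout (which, together with the
finiteness of the measure of balls, forces `diam X = ∞`, so the reverse doubling
condition is stated for all radii and all `λ ≥ 1`). -/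
structure IsRDSpace (μ : Measure X) (κ n : ℝ) : Prop where
  regular : μ.Regular
  ball_pos : ∀ (x : X) (r : ℝ), 0 < r → 0 < μ (ball x r)
  ball_lt_top : ∀ (x : X) (r : ℝ), 0 < r → μ (ball x r) < ⊤
  kappa_pos : 0 < κ
  kappa_le_n : κ ≤ n
  doubling : ∃ C₁ : ℝ, 1 ≤ C₁ ∧ n = Real.logb 2 C₁ ∧
    ∀ (x : X) (r : ℝ), 0 < r → μ (ball x (2 * r)) ≤ ENNReal.ofReal C₁ * μ (ball x r)
  reverse_doubling : ∃ C₂ : ℝ, 0 < C₂ ∧ C₂ ≤ 1 ∧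
    ∀ (x : X) (r lam : ℝ), 0 < r → 1 ≤ lam →
      ENNReal.ofReal (C₂ * lam ^ κ) * μ (ball x r) ≤ μ (ball x (lam * r))
  measure_univ_eq_top : μ Set.univ = ⊤

/-- There is a positive nondecreasing function `Φ` on `[0,∞)` with
`μ(B(x,r)) ≍ Φ(r)` uniformly in `x` and `r > 0`. -/
def HasMeasureFunction (μ : Measure X) : Prop :=
  ∃ Φ : ℝ → ℝ, (∀ r : ℝ, 0 < r → 0 < Φ r) ∧ MonotoneOn Φ (Set.Ici (0 : ℝ)) ∧
    ∃ c₁ c₂ : ℝ, 0 < c₁ ∧ 0 < c₂ ∧ ∀ (x : X) (r : ℝ), 0 < r →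
      ENNReal.ofReal (c₁ * Φ r) ≤ μ (ball x r) ∧ μ (ball x r) ≤ ENNReal.ofReal (c₂ * Φ r)

/-- `ρ(ȳ, x̄) = max_{1 ≤ j ≤ m} d(y_j, x)`. -/
def rho {m : ℕ} (x : X) (y : Fin m → X) : ℝ := ⨆ j, dist (y j) x

/-- A strongly singular generalized kernel on an RD-space with parameters
`(m, ε, α, p₀)` (`p₀'` the conjugate exponent of `p₀`, RD-parameters `κ ≤ n`). -/
def IsSSGKernel (μ : Measure X) (m : ℕ) (κ n ε α p₀ p₀' : ℝ)
    (K : X → (Fin m → X) → ℝ) : Prop :=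
  LocallyIntegrableOn (fun z : X × (Fin m → X) => K z.1 z.2)
    {z : X × (Fin m → X) | ¬ ∀ j, z.2 j = z.1} (μ.prod (Measure.pi fun _ : Fin m => μ)) ∧
  ∃ C_K : ℝ, 0 < C_K ∧ ∀ x x' : X, x ≠ x' → ∀ k : ℕ, 1 ≤ k →
    (∫⁻ y in {y : Fin m → X |
        2 ^ k * dist x x' ^ (if 1 ≤ dist x x' then (1 : ℝ) else α) ≤ rho x y ∧
        rho x y ≤ 2 ^ (k + 1) * dist x x' ^ (if 1 ≤ dist x x' then (1 : ℝ) else α)},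
      ENNReal.ofReal (|K x y - K x' y| ^ p₀) ∂(Measure.pi fun _ : Fin m => μ)) ^ (1 / p₀)
    ≤ ENNReal.ofReal (C_K *
        dist x x' ^ (ε - (if 1 ≤ dist x x' then (1 : ℝ) else α) *
          ((if 1 ≤ dist x x' then n else κ) * m / p₀' + ε / α)) *
        2 ^ (-(k : ℝ) * (n * m / p₀' + ε / α)))

/-- An `m`-linear strongly singular integral operator with generalized kernel
(`m`-GSSIO) on an RD-space. -/
structure IsGSSIO (μ : Measure X) (m : ℕ) (κ n ε α p₀ p₀' q : ℝ)
    (r l : Fin m → ℝ) (T : (Fin m → X → ℝ) → X → ℝ) : Prop where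
  m_pos : 0 < m
  eps_pos : 0 < ε
  alpha_pos : 0 < α
  alpha_le_one : α ≤ 1
  p0_gt_one : 1 < p₀
  p0_conj : 1 / p₀ + 1 / p₀' = 1
  kernel : ∃ K : X → (Fin m → X) → ℝ, IsSSGKernel μ m κ n ε α p₀ p₀' K ∧
    ∀ f : Fin m → X → ℝ,
      (∀ j, ∃ L : ℝ≥0, LipschitzWith L (f j)) →
      (∀ j, IsBounded (tsupport (f j))) →
      ∀ x, x ∉ ⋂ j, tsupport (f j) →
        T f x = ∫ y : Fin m → X, K x y * ∏ j, f j (y j) ∂(Measure.pi fun _ : Fin m => μ)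
  r_ge_one : ∀ j, 1 ≤ r j
  weak_r : ∃ C : ℝ, 0 < C ∧ ∀ f : Fin m → X → ℝ, (∀ j, Measurable (f j)) →
    weakLpNormW μ (∑ j, 1 / r j)⁻¹ (fun _ => 1) (T f) ≤
      ENNReal.ofReal C * ∏ j, lpNormW μ (r j) (fun _ => 1) (f j)
  l_ge_one : ∀ j, 1 ≤ l j
  lq_pos : 0 < (∑ j, 1 / l j)⁻¹ / q
  lq_le : (∑ j, 1 / l j)⁻¹ / q ≤ α * κ / n
  weak_l : ∃ C : ℝ, 0 < C ∧ ∀ f : Fin m → X → ℝ, (∀ j, Measurable (f j)) →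
    weakLpNormW μ q (fun _ => 1) (T f) ≤
      ENNReal.ofReal C * ∏ j, lpNormW μ (l j) (fun _ => 1) (f j)

end Defs

/-!
Kolmogorov's inequality, proved by splitting `|h|` along the dyadic levels `2^k a`, turns the
weak type `(l₁, …, l_m; q)` bound into a bound for the `L^δ` average of `T(f⃗ χ_{16B̃})` over
`B`, at the price of a factor `μ(B)^{-1/q}`. By Hölder's inequality each `‖f_j χ_{16B̃}‖_{l_j}`
is at most `μ(16B̃)^{1/l_j}` times the `p₀'`-average of `f_j` over `16B̃ ∋ x`, and the product
of these averages is controlled by `𝓜_{p₀'}(f⃗)(x)`. What remains is `μ(B)^{-1/q} μ(16B̃)^{1/l}`: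
reverse doubling gives `μ(16B̃) ≲ r_B^{ακ} μ(B(z_B, 1))`, doubling gives
`μ(B(z_B, 1)) ≲ r_B^{-n} μ(B)`, and the leftover power `μ(B(z_B, 1))^{1/l - 1/q}` is bounded
uniformly by `Φ(1)^{1/l - 1/q}`. This leaves `r_B^{ακ/l - n/q}`, whose exponent is nonnegative
because `l/q ≤ ακ/n`; as `r_B < 1` this also gives the second inequality.
-/

section Kolmogorov

variable {Ω : Type*}

lemma exists_two_pow_lt_le {x : ℝ} (hx : 1 < x) : ∃ k : ℕ, 2 ^ k < x ∧ x ≤ 2 ^ (k + 1) := by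
  classical
  have hex : ∃ k : ℕ, x ≤ 2 ^ (k + 1) := by
    obtain ⟨k, hk⟩ := pow_unbounded_of_one_lt x one_lt_two
    exact ⟨k, hk.le.trans (pow_le_pow_right₀ one_le_two k.le_succ)⟩
  refine ⟨Nat.find hex, ?_, Nat.find_spec hex⟩
  cases hk : Nat.find hex with
  | zero => simpa using hx
  | succ j => simpa using Nat.find_min hex (show j < Nat.find hex by omega)

lemma ofReal_rpow_abs_le_add_tsum_indicator (h : Ω → ℝ) {a δ : ℝ} (ha : 0 < a) (hδ : 0 ≤ δ)
    {S : ℕ → Set Ω} (hS : ∀ k, {y | 2 ^ k * a < |h y|} ⊆ S k) (z : Ω) :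
    ENNReal.ofReal (|h z| ^ δ) ≤ ENNReal.ofReal (a ^ δ) +
      ∑' k, (S k).indicator (fun _ => ENNReal.ofReal ((2 ^ (k + 1) * a) ^ δ)) z := by
  rcases le_or_gt |h z| a with hle | hlt
  · exact (ENNReal.ofReal_le_ofReal (by gcongr)).trans le_self_add
  obtain ⟨k, hk, hk1⟩ := exists_two_pow_lt_le ((one_lt_div ha).2 hlt)
  rw [lt_div_iff₀ ha] at hk
  rw [div_le_iff₀ ha] at hk1
  calc ENNReal.ofReal (|h z| ^ δ) ≤ ENNReal.ofReal ((2 ^ (k + 1) * a) ^ δ) := by gcongr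
    _ = (S k).indicator (fun _ => ENNReal.ofReal ((2 ^ (k + 1) * a) ^ δ)) z :=
      (indicator_of_mem (hS k hk) (fun _ => ENNReal.ofReal ((2 ^ (k + 1) * a) ^ δ))).symm
    _ ≤ ∑' k, (S k).indicator (fun _ => ENNReal.ofReal ((2 ^ (k + 1) * a) ^ δ)) z :=
      ENNReal.le_tsum k
    _ ≤ _ := le_add_self

variable [MeasurableSpace Ω]

lemma setLIntegral_rpow_abs_le_of_measure_lt_abs_le {μ : Measure Ω} {B : Set Ω} {h : Ω → ℝ}
    {a δ q : ℝ} (ha : 0 < a) (hδ : 0 ≤ δ) (hδq : δ < q)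
    (hdist : ∀ t, 0 < t → μ {y | t < |h y|} ≤ ENNReal.ofReal ((a / t) ^ q) * μ B) :
    ∫⁻ z in B, ENNReal.ofReal (|h z| ^ δ) ∂μ ≤
      ENNReal.ofReal ((1 + 2 ^ δ * (1 - 2 ^ (δ - q))⁻¹) * a ^ δ) * μ B := by
  set ρ : ℝ := 2 ^ (δ - q) with hρ
  have hρ0 : 0 ≤ ρ := by positivity
  have hρ1 : 0 < 1 - ρ := sub_pos.2 (Real.rpow_lt_one_of_one_lt_of_neg one_lt_two (by linarith))
  set S : ℕ → Set Ω := fun k => toMeasurable μ {y | 2 ^ k * a < |h y|}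
  have hreal : ∀ k : ℕ, (2 ^ (k + 1) * a) ^ δ * (a / (2 ^ k * a)) ^ q = 2 ^ δ * a ^ δ * ρ ^ k := by
    intro k
    rw [div_mul_cancel_right₀ ha.ne', pow_succ', mul_assoc,
      Real.mul_rpow two_pos.le (by positivity), Real.mul_rpow (by positivity) ha.le, Real.inv_rpow (by positivity),
      ← Real.rpow_pow_comm two_pos.le δ k, ← Real.rpow_pow_comm two_pos.le q k,
      hρ, Real.rpow_sub two_pos, div_pow]
    field_simp
  calc ∫⁻ z in B, ENNReal.ofReal (|h z| ^ δ) ∂μ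
      ≤ ∫⁻ z in B, (ENNReal.ofReal (a ^ δ) +
          ∑' k, (S k).indicator (fun _ => ENNReal.ofReal ((2 ^ (k + 1) * a) ^ δ)) z) ∂μ :=
        lintegral_mono fun z => ofReal_rpow_abs_le_add_tsum_indicator h ha hδ
          (fun k => subset_toMeasurable _ _) z
    _ = ENNReal.ofReal (a ^ δ) * μ B +
          ∑' k : ℕ, ENNReal.ofReal ((2 ^ (k + 1) * a) ^ δ) * μ.restrict B (S k) := by
        rw [lintegral_add_left measurable_const, lintegral_const, Measure.restrict_apply_univ,
          lintegral_tsum fun k => (measurable_const.indicator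
            (measurableSet_toMeasurable μ _)).aemeasurable]
        simp_rw [lintegral_indicator_const (measurableSet_toMeasurable μ _)]
        rfl
    _ ≤ ENNReal.ofReal (a ^ δ) * μ B +
          ∑' k : ℕ, ENNReal.ofReal ((2 ^ (k + 1) * a) ^ δ) *
            (ENNReal.ofReal ((a / (2 ^ k * a)) ^ q) * μ B) := by
        gcongr with k
        calc μ.restrict B (S k) ≤ μ (S k) := Measure.restrict_le_self _
          _ = μ {y | 2 ^ k * a < |h y|} := measure_toMeasurable _
          _ ≤ _ := hdist _ (by positivity)
    _ = ENNReal.ofReal (a ^ δ) * μ B +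
          ENNReal.ofReal (2 ^ δ * a ^ δ) * (1 - ENNReal.ofReal ρ)⁻¹ * μ B := by
        have hterm : ∀ k : ℕ, ENNReal.ofReal ((2 ^ (k + 1) * a) ^ δ) *
            (ENNReal.ofReal ((a / (2 ^ k * a)) ^ q) * μ B) =
            ENNReal.ofReal (2 ^ δ * a ^ δ) * ENNReal.ofReal ρ ^ k * μ B := fun k => by
          rw [← mul_assoc, ← ENNReal.ofReal_mul (by positivity), hreal,
            ENNReal.ofReal_mul (by positivity), ENNReal.ofReal_pow hρ0]
        rw [tsum_congr hterm, ENNReal.tsum_mul_right, ENNReal.tsum_mul_left, ENNReal.tsum_geometric]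
    _ = _ := by
        rw [← ENNReal.ofReal_one, ← ENNReal.ofReal_sub _ hρ0, ← ENNReal.ofReal_inv_of_pos hρ1,
          ← ENNReal.ofReal_mul (by positivity), ← add_mul, ← ENNReal.ofReal_add (by positivity)
          (by positivity)]
        ring_nf

lemma measure_lt_abs_le_of_weakLpNormW_le {μ : Measure Ω} {B : Set Ω} {h : Ω → ℝ} {a q t : ℝ}
    (ha : 0 ≤ a) (hq : 0 < q) (ht : 0 < t)
    (hW : weakLpNormW μ q (fun _ => 1) h ≤ ENNReal.ofReal a * μ B ^ (1 / q)) :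
    μ {y | t < |h y|} ≤ ENNReal.ofReal ((a / t) ^ q) * μ B := by
  have hlevel : ENNReal.ofReal t * μ {y | t < |h y|} ^ (1 / q) ≤ ENNReal.ofReal a * μ B ^ (1 / q) :=
    le_trans (le_iSup₂_of_le t ht (by simp)) hW
  have hroot : μ {y | t < |h y|} ^ (1 / q) ≤ ENNReal.ofReal (a / t) * μ B ^ (1 / q) := by
    have hcancel : ENNReal.ofReal t * (ENNReal.ofReal (a / t) * μ B ^ (1 / q)) =
        ENNReal.ofReal a * μ B ^ (1 / q) := by
      rw [← mul_assoc, ← ENNReal.ofReal_mul ht.le, mul_div_cancel₀ _ ht.ne']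
    exact (ENNReal.mul_le_mul_iff_right (by simpa using ht) ENNReal.ofReal_ne_top).1
      (hlevel.trans hcancel.ge)
  calc μ {y | t < |h y|} = (μ {y | t < |h y|} ^ (1 / q)) ^ q := by
        rw [one_div, ENNReal.rpow_inv_rpow hq.ne']
    _ ≤ (ENNReal.ofReal (a / t) * μ B ^ (1 / q)) ^ q := by gcongr
    _ = ENNReal.ofReal ((a / t) ^ q) * μ B := by
        rw [ENNReal.mul_rpow_of_nonneg _ _ hq.le, one_div, ENNReal.rpow_inv_rpow hq.ne',
          ENNReal.ofReal_rpow_of_nonneg (by positivity) hq.le]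

lemma average_rpow_abs_le_of_weakLpNormW_le {μ : Measure Ω} {B : Set Ω} {h : Ω → ℝ} {a δ q : ℝ}
    (ha : 0 < a) (hδ : 0 < δ) (hδq : δ < q) (hB0 : μ B ≠ 0) (hB : μ B ≠ ⊤)
    (hW : weakLpNormW μ q (fun _ => 1) h ≤ ENNReal.ofReal a * μ B ^ (1 / q)) :
    ((μ B)⁻¹ * ∫⁻ z in B, ENNReal.ofReal (|h z| ^ δ) ∂μ) ^ (1 / δ) ≤
      ENNReal.ofReal ((1 + 2 ^ δ * (1 - 2 ^ (δ - q))⁻¹) ^ (1 / δ) * a) := by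
  have hρ : 0 < 1 - (2 : ℝ) ^ (δ - q) :=
    sub_pos.2 (Real.rpow_lt_one_of_one_lt_of_neg one_lt_two (by linarith))
  have hint := setLIntegral_rpow_abs_le_of_measure_lt_abs_le ha hδ.le hδq fun t ht =>
    measure_lt_abs_le_of_weakLpNormW_le ha.le (hδ.trans hδq) ht hW
  calc ((μ B)⁻¹ * ∫⁻ z in B, ENNReal.ofReal (|h z| ^ δ) ∂μ) ^ (1 / δ)
      ≤ ((μ B)⁻¹ *
          (ENNReal.ofReal ((1 + 2 ^ δ * (1 - 2 ^ (δ - q))⁻¹) * a ^ δ) * μ B)) ^ (1 / δ) := by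
        gcongr
    _ = ENNReal.ofReal ((1 + 2 ^ δ * (1 - 2 ^ (δ - q))⁻¹) * a ^ δ) ^ (1 / δ) := by
        rw [mul_comm, mul_assoc, ENNReal.mul_inv_cancel hB0 hB, mul_one]
    _ = _ := by
        rw [ENNReal.ofReal_rpow_of_nonneg (by positivity) (by positivity),
          Real.mul_rpow (by positivity) (by positivity), ← Real.rpow_mul ha.le,
          mul_one_div_cancel hδ.ne', Real.rpow_one]

lemma exists_average_rpow_abs_le_weakLpNormW {δ q : ℝ} (hδ : 0 < δ) (hδq : δ < q) :
    ∃ K : ℝ, 0 < K ∧ ∀ (μ : Measure Ω) (B : Set Ω) (h : Ω → ℝ), μ B ≠ 0 → μ B ≠ ⊤ →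
      ((μ B)⁻¹ * ∫⁻ z in B, ENNReal.ofReal (|h z| ^ δ) ∂μ) ^ (1 / δ) ≤
        ENNReal.ofReal K * (weakLpNormW μ q (fun _ => 1) h * μ B ^ (-(1 / q))) := by
  have hρ : 0 < 1 - (2 : ℝ) ^ (δ - q) :=
    sub_pos.2 (Real.rpow_lt_one_of_one_lt_of_neg one_lt_two (by linarith))
  set K : ℝ := (1 + 2 ^ δ * (1 - 2 ^ (δ - q))⁻¹) ^ (1 / δ)
  have hK : 0 < K := by positivity
  refine ⟨K, hK, fun μ B h hB0 hB => ?_⟩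
  have hK0 : ENNReal.ofReal K ≠ 0 := by simpa using hK
  rw [mul_comm (ENNReal.ofReal K), ← ENNReal.div_le_iff hK0 ENNReal.ofReal_ne_top]
  -- the previous lemma needs `0 < a`: approximate `‖h‖_{q,∞} μ(B)^{-1/q}` from above
  refine le_of_forall_gt_imp_ge_of_dense fun c hc => ?_
  rcases eq_or_ne c ⊤ with rfl | hc_top
  · exact le_top
  have ha : 0 < c.toReal := ENNReal.toReal_pos (ne_bot_of_gt hc) hc_top
  have hW : weakLpNormW μ q (fun _ => 1) h ≤ ENNReal.ofReal c.toReal * μ B ^ (1 / q) := by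
    calc weakLpNormW μ q (fun _ => 1) h
        = weakLpNormW μ q (fun _ => 1) h * μ B ^ (-(1 / q)) * μ B ^ (1 / q) := by
          rw [mul_assoc, ← ENNReal.rpow_add _ _ hB0 hB, neg_add_cancel, ENNReal.rpow_zero, mul_one]
      _ ≤ ENNReal.ofReal c.toReal * μ B ^ (1 / q) := by
          rw [ENNReal.ofReal_toReal hc_top]; gcongr
  rw [ENNReal.div_le_iff hK0 ENNReal.ofReal_ne_top, ← ENNReal.ofReal_toReal hc_top,
    ← ENNReal.ofReal_mul ha.le, mul_comm c.toReal]
  exact average_rpow_abs_le_of_weakLpNormW_le ha hδ hδq hB0 hB hW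

end Kolmogorov

lemma ENNReal.rpow_sum {ι : Type*} {x : ℝ≥0∞} (hx0 : x ≠ 0) (hx : x ≠ ⊤) (s : Finset ι)
    (c : ι → ℝ) : x ^ (∑ i ∈ s, c i) = ∏ i ∈ s, x ^ c i := by
  classical
  induction s using Finset.induction with
  | empty => simp
  | insert i s hi ih =>
    rw [Finset.sum_insert hi, Finset.prod_insert hi, ENNReal.rpow_add _ _ hx0 hx, ih]

section Holder

variable {X : Type*} [MeasurableSpace X]

lemma lpNormW_indicator_le {μ : Measure X} {s : Set X} (hs : MeasurableSet s) (hs0 : μ s ≠ 0)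
    (hs_top : μ s ≠ ⊤) {f : X → ℝ} (hf : AEStronglyMeasurable f (μ.restrict s)) {l p : ℝ}
    (hl : 0 < l) (hlp : l ≤ p) :
    lpNormW μ l (fun _ => 1) (s.indicator f) ≤
      μ s ^ (1 / l) * ((μ s)⁻¹ * ∫⁻ y in s, ENNReal.ofReal |(|f y| ^ p)| ∂μ) ^ (1 / p) := by
  have hp : 0 < p := hl.trans_le hlp
  have hlhs : lpNormW μ l (fun _ => 1) (s.indicator f) = eLpNorm' f l (μ.restrict s) := by
    rw [lpNormW, eLpNorm'_eq_lintegral_enorm, ← lintegral_indicator hs]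
    congr 1
    refine lintegral_congr fun y => ?_
    by_cases hy : y ∈ s
    · simp [hy, Real.enorm_eq_ofReal_abs, ENNReal.ofReal_rpow_of_nonneg (abs_nonneg _) hl.le]
    · simp [hy, Real.zero_rpow hl.ne']
  have hrhs : eLpNorm' f p (μ.restrict s) =
      μ s ^ (1 / p) * ((μ s)⁻¹ * ∫⁻ y in s, ENNReal.ofReal |(|f y| ^ p)| ∂μ) ^ (1 / p) := by
    rw [eLpNorm'_eq_lintegral_enorm, ← ENNReal.mul_rpow_of_nonneg _ _ (by positivity), ← mul_assoc,
      ENNReal.mul_inv_cancel hs0 hs_top, one_mul]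
    congr 1
    refine lintegral_congr fun y => ?_
    rw [abs_of_nonneg (by positivity), Real.enorm_eq_ofReal_abs,
      ENNReal.ofReal_rpow_of_nonneg (abs_nonneg _) hp.le]
  calc lpNormW μ l (fun _ => 1) (s.indicator f) = eLpNorm' f l (μ.restrict s) := hlhs
    _ ≤ eLpNorm' f p (μ.restrict s) * (μ.restrict s) univ ^ (1 / l - 1 / p) :=
      eLpNorm'_le_eLpNorm'_mul_rpow_measure_univ hl hlp hf
    _ = _ := by
      rw [hrhs, Measure.restrict_apply_univ, mul_right_comm, ← ENNReal.rpow_add _ _ hs0 hs_top,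
        add_sub_cancel]

end Holder

section Balls

variable {X : Type*} [MetricSpace X] [MeasurableSpace X] [OpensMeasurableSpace X]

lemma prod_lpNormW_indicator_ball_le_multiMaximalPow {μ : Measure X} {m : ℕ}
    {f : Fin m → X → ℝ} {l : Fin m → ℝ} {p : ℝ} {c x : X} {r : ℝ} (hx : x ∈ ball c r)
    (h0 : μ (ball c r) ≠ 0) (htop : μ (ball c r) ≠ ⊤)
    (hf : ∀ j, AEStronglyMeasurable (f j) (μ.restrict (ball c r)))
    (hl : ∀ j, 0 < l j) (hlp : ∀ j, l j ≤ p) (hp : 0 < p) :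
    ∏ j, lpNormW μ (l j) (fun _ => 1) ((ball c r).indicator (f j)) ≤
      μ (ball c r) ^ (∑ j, 1 / l j) * multiMaximalPow μ p f x := by
  calc ∏ j, lpNormW μ (l j) (fun _ => 1) ((ball c r).indicator (f j))
      ≤ ∏ j, (μ (ball c r) ^ (1 / l j) * ((μ (ball c r))⁻¹ *
          ∫⁻ y in ball c r, ENNReal.ofReal |(|f j y| ^ p)| ∂μ) ^ (1 / p)) :=
        Finset.prod_le_prod' fun j _ =>
          lpNormW_indicator_le measurableSet_ball h0 htop (hf j) (hl j) (hlp j)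
    _ = μ (ball c r) ^ (∑ j, 1 / l j) * (∏ j, (μ (ball c r))⁻¹ *
          ∫⁻ y in ball c r, ENNReal.ofReal |(|f j y| ^ p)| ∂μ) ^ (1 / p) := by
        rw [Finset.prod_mul_distrib, ENNReal.rpow_sum h0 htop,
          ENNReal.prod_rpow_of_nonneg (by positivity)]
    _ ≤ _ := by
        unfold multiMaximalPow multiMaximal
        gcongr
        exact le_iSup₂_of_le c r (le_iSup₂_of_le (pos_of_mem_ball hx) hx le_rfl)

end Balls

section Doubling

variable {Y : Type*} [PseudoMetricSpace Y] [MeasurableSpace Y]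

lemma measure_ball_two_pow_mul_le {μ : Measure Y} {C : ℝ} (hC : 0 ≤ C)
    (hd : ∀ (x : Y) (r : ℝ), 0 < r → μ (ball x (2 * r)) ≤ ENNReal.ofReal C * μ (ball x r))
    (x : Y) {r : ℝ} (hr : 0 < r) (N : ℕ) :
    μ (ball x (2 ^ N * r)) ≤ ENNReal.ofReal (C ^ N) * μ (ball x r) := by
  induction N with
  | zero => simp
  | succ N ih =>
    calc μ (ball x (2 ^ (N + 1) * r)) = μ (ball x (2 * (2 ^ N * r))) := by rw [pow_succ', mul_assoc]
      _ ≤ ENNReal.ofReal C * μ (ball x (2 ^ N * r)) := hd x _ (by positivity)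
      _ ≤ ENNReal.ofReal C * (ENNReal.ofReal (C ^ N) * μ (ball x r)) := by gcongr
      _ = ENNReal.ofReal (C ^ (N + 1)) * μ (ball x r) := by
        rw [← mul_assoc, ← ENNReal.ofReal_mul hC, pow_succ']

end Doubling

namespace IsRDSpace

variable {X : Type*} [MetricSpace X] [MeasurableSpace X] {μ : Measure X} {κ n : ℝ}

lemma measure_ball_mul_le (hRD : IsRDSpace μ κ n) (x : X) {r t : ℝ} (hr : 0 < r) (ht : 1 ≤ t) :
    μ (ball x (t * r)) ≤ ENNReal.ofReal ((2 * t) ^ n) * μ (ball x r) := by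
  obtain ⟨C₁, hC₁, hn, hd⟩ := hRD.doubling
  have hC : C₁ = 2 ^ n := by rw [hn, Real.rpow_logb two_pos (by norm_num) (by linarith)]
  have hn0 : 0 ≤ n := hRD.kappa_pos.le.trans hRD.kappa_le_n
  obtain ⟨N, hN, hN1⟩ := exists_nat_pow_near ht one_lt_two
  calc μ (ball x (t * r)) ≤ μ (ball x (2 ^ (N + 1) * r)) :=
        measure_mono (ball_subset_ball (by gcongr))
    _ ≤ ENNReal.ofReal (C₁ ^ (N + 1)) * μ (ball x r) :=
        measure_ball_two_pow_mul_le (by linarith) hd x hr _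
    _ ≤ ENNReal.ofReal ((2 * t) ^ n) * μ (ball x r) := by
        rw [hC, Real.rpow_pow_comm two_pos.le, pow_succ']
        gcongr

lemma measure_ball_one_le (hRD : IsRDSpace μ κ n) (x : X) {r : ℝ} (hr : 0 < r) (hr1 : r ≤ 1) :
    μ (ball x 1) ≤ ENNReal.ofReal (2 ^ n * r ^ (-n)) * μ (ball x r) := by
  have h := hRD.measure_ball_mul_le x hr ((one_le_inv₀ hr).2 hr1)
  rwa [inv_mul_cancel₀ hr.ne', Real.mul_rpow two_pos.le (by positivity), Real.inv_rpow hr.le,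
    ← Real.rpow_neg hr.le] at h

lemma exists_measure_ball_mul_rpow_le (hRD : IsRDSpace μ κ n) {α a : ℝ} (hα : 0 ≤ α)
    (ha : 1 ≤ a) :
    ∃ C : ℝ, 0 < C ∧ ∀ (x : X) (r : ℝ), 0 < r → r ≤ 1 →
      μ (ball x (a * r ^ α)) ≤ ENNReal.ofReal (C * r ^ (α * κ)) * μ (ball x 1) := by
  obtain ⟨C₂, hC₂, -, hrev⟩ := hRD.reverse_doubling
  refine ⟨(2 * a) ^ n * C₂⁻¹, by positivity, fun x r hr hr1 => ?_⟩
  set s := r ^ α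
  have hs : 0 < s := by positivity
  have hrev' := hrev x s s⁻¹ hs ((one_le_inv₀ hs).2 (Real.rpow_le_one hr.le hr1 hα))
  rw [inv_mul_cancel₀ hs.ne'] at hrev'
  have hinv : ENNReal.ofReal (C₂⁻¹ * s ^ κ) * ENNReal.ofReal (C₂ * s⁻¹ ^ κ) = 1 := by
    rw [← ENNReal.ofReal_mul (by positivity), Real.inv_rpow hs.le, ← ENNReal.ofReal_one]
    congr 1
    field_simp
  calc μ (ball x (a * s)) ≤ ENNReal.ofReal ((2 * a) ^ n) * μ (ball x s) :=
        hRD.measure_ball_mul_le x hs ha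
    _ = ENNReal.ofReal ((2 * a) ^ n) * ENNReal.ofReal (C₂⁻¹ * s ^ κ) *
          (ENNReal.ofReal (C₂ * s⁻¹ ^ κ) * μ (ball x s)) := by
        rw [mul_assoc, ← mul_assoc (ENNReal.ofReal (C₂⁻¹ * s ^ κ)), hinv, one_mul]
    _ ≤ ENNReal.ofReal ((2 * a) ^ n) * ENNReal.ofReal (C₂⁻¹ * s ^ κ) * μ (ball x 1) := by gcongr
    _ = _ := by
        rw [← ENNReal.ofReal_mul (by positivity), ← Real.rpow_mul hr.le, ← mul_assoc]

lemma exists_rpow_measure_ball_mul_le (hRD : IsRDSpace μ κ n) (hΦ : HasMeasureFunction μ)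
    {α a q S : ℝ} (hα : 0 ≤ α) (ha : 1 ≤ a) (hq : 0 < q) (hSq : 1 / q ≤ S) :
    ∃ D : ℝ, 0 < D ∧ ∀ (z : X) (r : ℝ), 0 < r → r ≤ 1 →
      μ (ball z r) ^ (-(1 / q)) * μ (ball z (a * r ^ α)) ^ S ≤
        ENNReal.ofReal (D * r ^ (α * κ * S - n / q)) := by
  obtain ⟨C, hC, hbig⟩ := hRD.exists_measure_ball_mul_rpow_le hα ha
  obtain ⟨Φ, hΦpos, -, c₁, c₂, -, hc₂, hcmp⟩ := hΦ
  have hV₀ : 0 < c₂ * Φ 1 := mul_pos hc₂ (hΦpos 1 one_pos)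
  have hS : 0 ≤ S - 1 / q := sub_nonneg.2 hSq
  have hS0 : 0 ≤ S := (by positivity : 0 ≤ 1 / q).trans hSq
  refine ⟨C ^ S * (c₂ * Φ 1) ^ (S - 1 / q) * 2 ^ (n / q), by positivity, fun z r hr hr1 => ?_⟩
  set M := μ (ball z r)
  set V := μ (ball z 1)
  have hM0 : M ≠ 0 := (hRD.ball_pos z r hr).ne'
  have hM : M ≠ ⊤ := (hRD.ball_lt_top z r hr).ne
  have hreal : (C * r ^ (α * κ)) ^ S * (c₂ * Φ 1) ^ (S - 1 / q) * (2 ^ n * r ^ (-n)) ^ (1 / q) =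
      C ^ S * (c₂ * Φ 1) ^ (S - 1 / q) * 2 ^ (n / q) * r ^ (α * κ * S - n / q) := by
    rw [Real.mul_rpow hC.le (by positivity : (0 : ℝ) ≤ r ^ (α * κ)),
      Real.mul_rpow (by positivity : (0 : ℝ) ≤ 2 ^ n) (by positivity : (0 : ℝ) ≤ r ^ (-n)),
      ← Real.rpow_mul hr.le, ← Real.rpow_mul two_pos.le, ← Real.rpow_mul hr.le,
      sub_eq_add_neg (α * κ * S), Real.rpow_add hr]
    ring_nf
  calc M ^ (-(1 / q)) * μ (ball z (a * r ^ α)) ^ S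
      ≤ M ^ (-(1 / q)) * (ENNReal.ofReal (C * r ^ (α * κ)) * V) ^ S := by
        gcongr
        exact hbig z r hr hr1
    _ = M ^ (-(1 / q)) *
          (ENNReal.ofReal ((C * r ^ (α * κ)) ^ S) * V ^ (S - 1 / q) * V ^ (1 / q)) := by
        rw [ENNReal.mul_rpow_of_nonneg _ _ hS0, ENNReal.ofReal_rpow_of_nonneg (by positivity) hS0,
          mul_assoc (ENNReal.ofReal _), ← ENNReal.rpow_add_of_nonneg _ _ hS (by positivity),
          sub_add_cancel]
    _ ≤ M ^ (-(1 / q)) * (ENNReal.ofReal ((C * r ^ (α * κ)) ^ S) *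
          ENNReal.ofReal (c₂ * Φ 1) ^ (S - 1 / q) *
          (ENNReal.ofReal (2 ^ n * r ^ (-n)) * M) ^ (1 / q)) := by
        gcongr
        · exact (hcmp z 1 one_pos).2
        · exact hRD.measure_ball_one_le z hr hr1
    _ = ENNReal.ofReal ((C * r ^ (α * κ)) ^ S * (c₂ * Φ 1) ^ (S - 1 / q) *
          (2 ^ n * r ^ (-n)) ^ (1 / q)) * (M ^ (1 / q) * M ^ (-(1 / q))) := by
        rw [ENNReal.mul_rpow_of_nonneg _ _ (by positivity), ENNReal.ofReal_rpow_of_nonneg hV₀.le hS,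
          ENNReal.ofReal_rpow_of_nonneg (by positivity) (by positivity),
          ← ENNReal.ofReal_mul (by positivity), ENNReal.ofReal_mul (by positivity :
            (0 : ℝ) ≤ (C * r ^ (α * κ)) ^ S * (c₂ * Φ 1) ^ (S - 1 / q))]
        ring
    _ = _ := by
        rw [← ENNReal.rpow_add _ _ hM0 hM, add_neg_cancel, ENNReal.rpow_zero, mul_one, hreal]

end IsRDSpace

section WeakType

variable {X : Type*} [MetricSpace X] [MeasurableSpace X] [OpensMeasurableSpace X] {μ : Measure X}

lemma exists_average_rpow_abs_le_of_weakType {m : ℕ} {l : Fin m → ℝ} {p q δ : ℝ}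
    (hl : ∀ j, 0 < l j) (hlp : ∀ j, l j ≤ p) (hp : 0 < p) (hδ : 0 < δ) (hδq : δ < q)
    {T : (Fin m → X → ℝ) → X → ℝ}
    (hT : ∃ C : ℝ, 0 < C ∧ ∀ f : Fin m → X → ℝ, (∀ j, Measurable (f j)) →
      weakLpNormW μ q (fun _ => 1) (T f) ≤
        ENNReal.ofReal C * ∏ j, lpNormW μ (l j) (fun _ => 1) (f j)) :
    ∃ C : ℝ, 0 < C ∧ ∀ (B : Set X) (c x : X) (r : ℝ) (f : Fin m → X → ℝ),
      μ B ≠ 0 → μ B ≠ ⊤ → μ (ball c r) ≠ 0 → μ (ball c r) ≠ ⊤ → x ∈ ball c r →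
      (∀ j, Measurable (f j)) →
      ((μ B)⁻¹ * ∫⁻ z in B,
          ENNReal.ofReal (|T (fun j => (ball c r).indicator (f j)) z| ^ δ) ∂μ) ^ (1 / δ) ≤
        ENNReal.ofReal C * (μ B ^ (-(1 / q)) * μ (ball c r) ^ (∑ j, 1 / l j)) *
          multiMaximalPow μ p f x := by
  obtain ⟨CT, hCT, hTf⟩ := hT
  obtain ⟨K, hK, hKol⟩ := exists_average_rpow_abs_le_weakLpNormW (Ω := X) hδ hδq
  refine ⟨K * CT, by positivity, fun B c x r f hB0 hB hc0 hc hx hf => ?_⟩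
  calc _ ≤ ENNReal.ofReal K * (weakLpNormW μ q (fun _ => 1)
          (T fun j => (ball c r).indicator (f j)) * μ B ^ (-(1 / q))) := hKol μ B _ hB0 hB
    _ ≤ ENNReal.ofReal K * (ENNReal.ofReal CT *
          (μ (ball c r) ^ (∑ j, 1 / l j) * multiMaximalPow μ p f x) * μ B ^ (-(1 / q))) := by
        gcongr
        refine (hTf _ fun j => (hf j).indicator measurableSet_ball).trans ?_
        gcongr
        exact prod_lpNormW_indicator_ball_le_multiMaximalPow hx hc0 hc
          (fun j => (hf j).aestronglyMeasurable) hl hlp hp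
    _ = _ := by
        rw [ENNReal.ofReal_mul hK.le]
        ring

end WeakType

lemma exponent_bounds_of_inv_div_le {S q b n : ℝ} (hS : 0 ≤ S) (hb : 0 < b) (hbn : b ≤ n)
    (hpos : 0 < S⁻¹ / q) (hle : S⁻¹ / q ≤ b / n) :
    0 < q ∧ 0 < S ∧ 1 / q ≤ S ∧ n / q ≤ b * S := by
  have hn : 0 < n := hb.trans_le hbn
  obtain ⟨hS', hq⟩ := (div_pos_iff.1 hpos).resolve_right fun h => (inv_nonneg.2 hS).not_gt h.1
  have hS0 : 0 < S := inv_pos.1 hS'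
  have hnq : n / q ≤ b * S := by
    rw [div_le_div_iff₀ hq hn] at hle
    rw [div_le_iff₀ hq]
    nlinarith [mul_le_mul_of_nonneg_left hle hS0.le, mul_inv_cancel₀ hS0.ne']
  refine ⟨hq, hS0, le_of_mul_le_mul_left ?_ hn, hnq⟩
  calc n * (1 / q) = n / q := by ring
    _ ≤ b * S := hnq
    _ ≤ n * S := by gcongr

theorem local_estimate_weak_q_general
    {X : Type*} [MetricSpace X] [MeasurableSpace X] [BorelSpace X]
    (μ : Measure X) (κ n : ℝ) (hRD : IsRDSpace μ κ n) (hΦ : HasMeasureFunction μ)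
    (α : ℝ) (hα0 : 0 < α) (hα1 : α ≤ 1)
    (m : ℕ) (l : Fin m → ℝ) (hl : ∀ j, 1 ≤ l j) (q : ℝ)
    (hlq0 : 0 < (∑ j, 1 / l j)⁻¹ / q)
    (hlq : (∑ j, 1 / l j)⁻¹ / q ≤ α * κ / n)
    (p₀' : ℝ) (hp₀' : ∀ j, l j ≤ p₀')
    (T : (Fin m → X → ℝ) → X → ℝ)
    (hT : ∃ C : ℝ, 0 < C ∧ ∀ f : Fin m → X → ℝ, (∀ j, Measurable (f j)) →
      weakLpNormW μ q (fun _ => 1) (T f) ≤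
        ENNReal.ofReal C * ∏ j, lpNormW μ (l j) (fun _ => 1) (f j))
    (δ : ℝ) (hδ0 : 0 < δ) (hδ : δ < q) :
    ∃ C : ℝ, 0 < C ∧ ∀ (zB : X) (rB : ℝ), 0 < rB → rB < (1 : ℝ) / 4 →
      ∀ x ∈ ball zB rB,
      ∀ f : Fin m → X → ℝ,
        (∀ j, Measurable (f j)) →
        (∀ j, ∃ M : ℝ, ∀ y, |f j y| ≤ M) →
        (∀ j, IsBounded (Function.support (f j))) →
        ((μ (ball zB rB))⁻¹ *
            ∫⁻ z in ball zB rB,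
              ENNReal.ofReal
                (|T (fun j => (ball zB (16 * rB ^ α)).indicator (f j)) z| ^ δ)
                ∂μ) ^ (1 / δ)
          ≤ ENNReal.ofReal (C * rB ^ (α * κ * (∑ j, 1 / l j) - n / q)) *
              multiMaximalPow μ p₀' f x ∧
        ((μ (ball zB rB))⁻¹ *
            ∫⁻ z in ball zB rB,
              ENNReal.ofReal
                (|T (fun j => (ball zB (16 * rB ^ α)).indicator (f j)) z| ^ δ)
                ∂μ) ^ (1 / δ)
          ≤ ENNReal.ofReal C * multiMaximalPow μ p₀' f x := by
  have hl0 : ∀ j, 0 < l j := fun j => one_pos.trans_le (hl j)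
  obtain ⟨hq, hS, hSq, hexp⟩ := exponent_bounds_of_inv_div_le
    (Finset.sum_nonneg fun j _ => (one_div_pos.2 (hl0 j)).le) (mul_pos hα0 hRD.kappa_pos)
    ((mul_le_of_le_one_left hRD.kappa_pos.le hα1).trans hRD.kappa_le_n) hlq0 hlq
  obtain ⟨j₀, -, -⟩ := Finset.exists_ne_zero_of_sum_ne_zero hS.ne'
  obtain ⟨C, hC, hloc⟩ := exists_average_rpow_abs_le_of_weakType hl0 hp₀'
    ((hl0 j₀).trans_le (hp₀' j₀)) hδ0 hδ hT
  obtain ⟨D, hD, hgeom⟩ :=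
    hRD.exists_rpow_measure_ball_mul_le hΦ hα0.le (a := 16) (by norm_num) hq hSq
  refine ⟨C * D, by positivity, fun zB rB hr0 hr x hx f hf _ _ => ?_⟩
  have hr1 : rB ≤ 1 := by linarith
  have hs : 0 < 16 * rB ^ α := by positivity
  have hxB : x ∈ ball zB (16 * rB ^ α) := ball_subset_ball
    (by nlinarith [Real.self_le_rpow_of_le_one hr0.le hr1 hα1]) hx
  have hmain : _ ≤ ENNReal.ofReal (C * D * rB ^ (α * κ * (∑ j, 1 / l j) - n / q)) *
      multiMaximalPow μ p₀' f x := calc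
    _ ≤ _ := hloc _ zB x _ f (hRD.ball_pos zB rB hr0).ne' (hRD.ball_lt_top zB rB hr0).ne
          (hRD.ball_pos _ _ hs).ne' (hRD.ball_lt_top _ _ hs).ne hxB hf
    _ ≤ ENNReal.ofReal C * ENNReal.ofReal (D * rB ^ (α * κ * (∑ j, 1 / l j) - n / q)) *
          multiMaximalPow μ p₀' f x := by
        gcongr
        exact hgeom zB rB hr0 hr1
    _ = _ := by rw [← ENNReal.ofReal_mul hC.le, mul_assoc C]
  refine ⟨hmain, hmain.trans ?_⟩
  gcongr ENNReal.ofReal ?_ * _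
  exact mul_le_of_le_one_right (by positivity) (Real.rpow_le_one hr0.le hr1 (sub_nonneg.2 hexp))

/-- Local estimate for the "good" part (case 2 of the proof of Theorem 2.1):
if the `m`-linear operator `T` is bounded from `L^{l₁}×⋯×L^{l_m}` to `L^{q,∞}`
with `0 < l/q ≤ ακ/n`, `p₀' ≥ max l_j` and `0 < δ < q`, then for any ball
`B = B(z_B, r_B)` with `0 < r_B < 1/4`, setting `B̃ = B(z_B, r_B^α)`, and any
`x ∈ B`,
`(μ(B)⁻¹ ∫_B |T(f₁χ_{16B̃},…,f_mχ_{16B̃})|^δ dμ)^{1/δ}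
  ≤ C r_B^{ακ/l − n/q} 𝓜_{p₀'}(f⃗)(x) ≤ C 𝓜_{p₀'}(f⃗)(x)`. -/
theorem local_estimate_weak_q
    {X : Type*} [MetricSpace X] [MeasurableSpace X] [BorelSpace X]
    (μ : Measure X) (κ n : ℝ) (hRD : IsRDSpace μ κ n) (hΦ : HasMeasureFunction μ)
    (α : ℝ) (hα0 : 0 < α) (hα1 : α ≤ 1)
    (m : ℕ) (hm : 0 < m) (l : Fin m → ℝ) (hl : ∀ j, 1 ≤ l j) (q : ℝ)
    (hlq0 : 0 < (∑ j, 1 / l j)⁻¹ / q)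
    (hlq : (∑ j, 1 / l j)⁻¹ / q ≤ α * κ / n)
    (p₀' : ℝ) (hp₀' : ∀ j, l j ≤ p₀')
    (T : (Fin m → X → ℝ) → X → ℝ)
    (hT : ∃ C : ℝ, 0 < C ∧ ∀ f : Fin m → X → ℝ, (∀ j, Measurable (f j)) →
      weakLpNormW μ q (fun _ => 1) (T f) ≤
        ENNReal.ofReal C * ∏ j, lpNormW μ (l j) (fun _ => 1) (f j))
    (δ : ℝ) (hδ0 : 0 < δ) (hδ : δ < q) :
    ∃ C : ℝ, 0 < C ∧ ∀ (zB : X) (rB : ℝ), 0 < rB → rB < (1 : ℝ) / 4 →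
      ∀ x ∈ ball zB rB,
      ∀ f : Fin m → X → ℝ,
        (∀ j, Measurable (f j)) →
        (∀ j, ∃ M : ℝ, ∀ y, |f j y| ≤ M) →
        (∀ j, IsBounded (Function.support (f j))) →
        ((μ (ball zB rB))⁻¹ *
            ∫⁻ z in ball zB rB,
              ENNReal.ofReal
                (|T (fun j => (ball zB (16 * rB ^ α)).indicator (f j)) z| ^ δ)
                ∂μ) ^ (1 / δ)
          ≤ ENNReal.ofReal (C * rB ^ (α * κ * (∑ j, 1 / l j) - n / q)) *
              multiMaximalPow μ p₀' f x ∧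
        ((μ (ball zB rB))⁻¹ *
            ∫⁻ z in ball zB rB,
              ENNReal.ofReal
                (|T (fun j => (ball zB (16 * rB ^ α)).indicator (f j)) z| ^ δ)
                ∂μ) ^ (1 / δ)
          ≤ ENNReal.ofReal C * multiMaximalPow μ p₀' f x :=
  local_estimate_weak_q_general μ κ n hRD hΦ α hα0 hα1 m l hl q hlq0 hlq p₀' hp₀' T hT δ hδ0 hδ
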